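/- Let N be a positive integer, α ∈ (1/(N+1), 1), p ∈ [0,1], M = ⌊Np⌋, and B_α = ⌈(N+1)(1-α) + αNp⌉. Then (N+1 - B_α)/(N+1 - M) ≤ α. -/
import Mathlib


/-- Key arithmetic inequality of the noisy-robust coverage guarantee:
for `N ≥ 1`, `α ∈ (1/(N+1), 1)`, `p ∈ [0,1]`, `M = ⌊Np⌋` and
`B_α = ⌈(N+1)(1-α) + αNp⌉`, one has `(N+1 - B_α)/(N+1 - M) ≤ α`. -/
theorem stmt_1 (N : ℕ) (hN : 0 < N) (α p : ℝ)
    (hα₁ : 1 / ((N : ℝ) + 1) < α) (hα₂ : α < 1)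
    (hp₀ : 0 ≤ p) (hp₁ : p ≤ 1) :
    ((N : ℝ) + 1 - (⌈((N : ℝ) + 1) * (1 - α) + α * N * p⌉ : ℤ)) /
        ((N : ℝ) + 1 - (⌊(N : ℝ) * p⌋ : ℤ)) ≤ α := by
  have hα0 : 0 ≤ α := le_trans (by positivity) hα₁.le
  have hM : ((⌊(N : ℝ) * p⌋ : ℤ) : ℝ) ≤ (N : ℝ) * p := Int.floor_le _
  have hNp : (N : ℝ) * p ≤ N := by nlinarith [(Nat.cast_pos.mpr hN : (0:ℝ) < N)]
  have hden : (0 : ℝ) < (N : ℝ) + 1 - (⌊(N : ℝ) * p⌋ : ℤ) := by linarith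
  rw [div_le_iff₀ hden]
  have hB : ((N : ℝ) + 1) * (1 - α) + α * N * p ≤
      ((⌈((N : ℝ) + 1) * (1 - α) + α * N * p⌉ : ℤ) : ℝ) := Int.le_ceil _
  nlinarith
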